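/- In the VPG construction setup: let u and v be distinct internal vertices such that u is not an ancestor of v and v is not an ancestor of u. Then [l_x(u), r_x(u)] ∩ [l_x(v), r_x(v)] = ∅. -/

import Mathlib

open SimpleGraph Set Function

/-- `u` is an ancestor of `v` with respect to root `r`:
`u` lies on the unique path in `T` from `r` to `v`. -/
def IsAncestor {V : Type*} (T : SimpleGraph V) (r u v : V) : Prop :=
  ∀ p : T.Walk r v, p.IsPath → u ∈ p.support

/-- `u` is the parent of `v` with respect to root `r`. -/
def IsParent {V : Type*} (T : SimpleGraph V) (r u v : V) : Prop :=
  IsAncestor T r u v ∧ u ≠ v ∧ T.Adj u v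

/-- `L^r(u)`: the set of leaves of `T` that are descendants of `u`. -/
def LeafSet {V : Type*} (T : SimpleGraph V) [Fintype V] [DecidableRel T.Adj] (r u : V) :
    Set V :=
  {c | T.degree c = 1 ∧ IsAncestor T r u c}

/-- The leaf `c_{j mod k}` index. -/
def cidx {k : ℕ} (hk : 0 < k) (j : ℕ) : Fin k := ⟨j % k, Nat.mod_lt _ hk⟩

/-- A set `A` of leaves is cyclically consecutive with respect to the enumeration `c`. -/
def CycConsec {V : Type*} {k : ℕ} (hk : 0 < k) (c : Fin k → V) (A : Set V) : Prop :=
  ∃ j m : ℕ, A = {x | ∃ t ≤ m, x = c (cidx hk (j + t))}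

/-!
Two internal vertices that are not ancestors of one another have disjoint sets of descendant
leaves, and these are blocks `b_s, …, b_t` and `b_{s'}, …, b_{t'}` of the enumeration, say with
`t < s'`. The abscissa of `b_j` is `j`, except that `b_0` sits at `3/2`, so `l_x` is increasing
on every block not containing `b_0`; the block of an internal vertex other than `r′` containing
`b_0` or `b_1` is a single leaf. Hence each horizontal extent is `[l_x(b_s), l_x(b_t)]`, and the
two extents are separated: by `l_x(b_t) < l_x(b_{s'})` when `s' ≥ 2`, and otherwise the blocks
are `{b_0}` and `{b_1}`, with extents `{3/2}` and `{1}`.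
-/

section Tree

variable {V : Type*} {T : SimpleGraph V}

theorem isAncestor_of_mem_support (hT : T.IsAcyclic) {r u v : V} {q : T.Walk r v}
    (hq : q.IsPath) (hu : u ∈ q.support) : IsAncestor T r u v := by
  intro p hp
  have hpq : p = q := congrArg Subtype.val ((hT.subsingleton_path r v).elim ⟨p, hp⟩ ⟨q, hq⟩)
  rwa [hpq]

theorem IsAncestor.total (hT : T.IsTree) {r u v c : V} (hu : IsAncestor T r u c)
    (hv : IsAncestor T r v c) : IsAncestor T r u v ∨ IsAncestor T r v u := by
  classical
  obtain ⟨p, hp, -⟩ := hT.existsUnique_path r c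
  have hu' := hu p hp
  have hv' := hv p hp
  rcases List.prefix_or_prefix_of_prefix (p.support_takeUntil_prefix_support hu')
      (p.support_takeUntil_prefix_support hv') with h | h
  · exact .inl <| isAncestor_of_mem_support hT.isAcyclic (hp.takeUntil hv')
      (h.subset (Walk.end_mem_support _))
  · exact .inr <| isAncestor_of_mem_support hT.isAcyclic (hp.takeUntil hu')
      (h.subset (Walk.end_mem_support _))

variable [Fintype V] [DecidableRel T.Adj]

theorem disjoint_leafSet_of_not_isAncestor (hT : T.IsTree) {r u v : V}
    (huv : ¬IsAncestor T r u v) (hvu : ¬IsAncestor T r v u) :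
    Disjoint (LeafSet T r u) (LeafSet T r v) :=
  Set.disjoint_left.2 fun _ hu hv => (hu.2.total hT hv.2).elim huv hvu

theorem exists_leafSet_eq_singleton_of_isAncestor (hT : T.IsTree) {r ℓ w : V}
    (hpath : ∀ p : T.Walk ℓ r, p.IsPath →
      ∀ w ∈ p.support, w ≠ ℓ → w ≠ r → ∃ z : V, LeafSet T r w = {z})
    (hwℓ : w ≠ ℓ) (hwr : w ≠ r) (hw : IsAncestor T r w ℓ) : ∃ z : V, LeafSet T r w = {z} := by
  obtain ⟨p, hp, -⟩ := hT.existsUnique_path r ℓ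
  exact hpath p.reverse hp.reverse w (by simpa using hw p hp) hwℓ hwr

theorem eq_of_leafSet_eq_image_Icc (hT : T.IsTree) {k : ℕ} {b : Fin k → V} (hinj : Injective b)
    {r w : V} {s t : Fin k} (hst : s ≤ t) (hL : LeafSet T r w = b '' Icc s t)
    (hwb : w ≠ b s) (hwr : w ≠ r)
    (hpath : ∀ p : T.Walk (b s) r, p.IsPath →
      ∀ w ∈ p.support, w ≠ b s → w ≠ r → ∃ z : V, LeafSet T r w = {z}) :
    s = t := by
  have hs : b s ∈ LeafSet T r w := hL ▸ mem_image_of_mem b (left_mem_Icc.2 hst)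
  have ht : b t ∈ LeafSet T r w := hL ▸ mem_image_of_mem b (right_mem_Icc.2 hst)
  obtain ⟨z, hz⟩ := exists_leafSet_eq_singleton_of_isAncestor hT hpath hwb hwr hs.2
  rw [hz, mem_singleton_iff] at hs ht
  exact hinj (hs.trans ht.symm)

end Tree

theorem lt_or_lt_of_disjoint_Icc {α : Type*} [LinearOrder α] {s t s' t' : α}
    (h : Disjoint (Icc s t) (Icc s' t')) (hst : s ≤ t) (hst' : s' ≤ t') : t < s' ∨ t' < s := by
  by_contra! hle
  exact Set.disjoint_left.1 h ⟨le_max_left s s', max_le hst hle.1⟩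
    ⟨le_max_right s s', max_le hle.2 hst'⟩

/-- The abscissa `l_x(b_j)` of the leaf `b_j`. -/
noncomputable def leafLx (j : ℕ) : ℝ := if j = 0 then 3 / 2 else j

theorem monotoneOn_leafLx : MonotoneOn leafLx (Ici 1) := by
  intro i hi j hj hij
  simp only [mem_Ici] at hi hj
  simp only [leafLx, if_neg (show i ≠ 0 by omega), if_neg (show j ≠ 0 by omega)]
  exact_mod_cast hij

theorem leafLx_lt_leafLx {i j : ℕ} (hij : i < j) (hj : 2 ≤ j) : leafLx i < leafLx j := by
  rw [show leafLx j = j from if_neg (by omega), leafLx]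
  split_ifs
  · exact (by norm_num : (3 / 2 : ℝ) < 2).trans_le (by exact_mod_cast hj)
  · exact_mod_cast hij

theorem lx_eq_leafLx {V : Type*} {k : ℕ} (hk : 2 < k) (b : Fin k → V) (lx : V → ℝ)
    (h0 : lx (b ⟨0, by omega⟩) = 1.5) (h1 : lx (b ⟨1, by omega⟩) = 1)
    (hlast : lx (b ⟨k - 1, by omega⟩) = (k : ℝ) - 1)
    (hmid : ∀ i : Fin k, 2 ≤ (i : ℕ) → (i : ℕ) ≤ k - 2 → lx (b i) = ((i : ℕ) : ℝ))
    (j : Fin k) : lx (b j) = leafLx j := by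
  obtain ⟨j, hj⟩ := j
  show lx (b ⟨j, hj⟩) = leafLx j
  rcases (by omega : j = 0 ∨ j = 1 ∨ j = k - 1 ∨ (2 ≤ j ∧ j ≤ k - 2)) with
    rfl | rfl | rfl | ⟨hj2, hjk⟩
  · rw [h0, leafLx, if_pos rfl]
    norm_num
  · rw [h1, leafLx, if_neg one_ne_zero, Nat.cast_one]
  · rw [hlast, leafLx, if_neg (by omega), Nat.cast_sub (by omega), Nat.cast_one]
  · rw [hmid ⟨j, hj⟩ hj2 hjk, leafLx, if_neg (by omega)]

theorem sInf_sSup_image_leafLx {α : Type*} {k : ℕ} {b : Fin k → α} {lx : α → ℝ}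
    (hlx : ∀ j, lx (b j) = leafLx j) {s t : Fin k} (hst : s ≤ t)
    (hs : (s : ℕ) ≤ 1 → (s : ℕ) = t) :
    sInf (lx '' (b '' Icc s t)) = leafLx s ∧ sSup (lx '' (b '' Icc s t)) = leafLx t := by
  have hmono : MonotoneOn (fun j : Fin k => leafLx j) (Icc s t) := by
    rcases le_or_gt (s : ℕ) 1 with h | h
    · rw [Fin.ext (hs h), Icc_self]
      exact subsingleton_singleton.monotoneOn _
    · exact fun i hi j hj hij => monotoneOn_leafLx (mem_Ici.2 (h.le.trans (Fin.le_def.1 hi.1)))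
        (mem_Ici.2 (h.le.trans (Fin.le_def.1 hj.1))) (Fin.le_def.1 hij)
  simp only [image_image, hlx]
  exact ⟨hmono.sInf_image_Icc hst, hmono.sSup_image_Icc hst⟩

theorem disjoint_Icc_leafLx {s t s' t' : ℕ} (hst : s ≤ t) (hts' : t < s')
    (hs : s ≤ 1 → s = t) (hs' : s' ≤ 1 → s' = t') :
    Disjoint (Icc (leafLx s) (leafLx t)) (Icc (leafLx s') (leafLx t')) := by
  rcases le_or_gt 2 s' with h2 | h2
  · exact Set.disjoint_left.2 fun x hx hx' =>
      (hx.2.trans_lt (leafLx_lt_leafLx hts' h2)).not_ge hx'.1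
  · obtain rfl : s' = 1 := by omega
    obtain rfl : t' = 1 := (hs' le_rfl).symm
    obtain rfl : t = 0 := by omega
    obtain rfl : s = 0 := by omega
    norm_num [leafLx]

/-- incomparable internal vertices have disjoint horizontal extents. -/
theorem stmt9
    {V : Type*} [Fintype V] (T : SimpleGraph V) [DecidableRel T.Adj]
    (hT : T.IsTree) {k : ℕ} (hk : 3 ≤ k) (b : Fin k → V)
    (hinj : Function.Injective b)
    (hleaf : ∀ v : V, T.degree v = 1 ↔ ∃ i : Fin k, v = b i)
    (r' : V)
    (hconsec : ∀ u : V, 2 ≤ T.degree u → ∃ s t : Fin k, s ≤ t ∧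
        LeafSet T r' u = {x | ∃ j : Fin k, s ≤ j ∧ j ≤ t ∧ x = b j})
    (hpath0 : ∀ p : T.Walk (b ⟨0, by omega⟩) r', p.IsPath →
        ∀ w ∈ p.support, w ≠ b ⟨0, by omega⟩ → w ≠ r' → ∃ z : V, LeafSet T r' w = {z})
    (hpath1 : ∀ p : T.Walk (b ⟨1, by omega⟩) r', p.IsPath →
        ∀ w ∈ p.support, w ≠ b ⟨1, by omega⟩ → w ≠ r' → ∃ z : V, LeafSet T r' w = {z})
    (h : ℕ)
    (lx rx ly ry : V → ℝ)
    (hb0 : lx (b ⟨0, by omega⟩) = 1.5 ∧ rx (b ⟨0, by omega⟩) = (k : ℝ) - 1 ∧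
      ly (b ⟨0, by omega⟩) = 0 ∧
      ry (b ⟨0, by omega⟩) = (h : ℝ) - (T.dist r' (b ⟨0, by omega⟩) : ℝ) + 2)
    (hb1 : lx (b ⟨1, by omega⟩) = 1 ∧ rx (b ⟨1, by omega⟩) = 2 ∧
      ly (b ⟨1, by omega⟩) = 1 ∧
      ry (b ⟨1, by omega⟩) = (h : ℝ) - (T.dist r' (b ⟨1, by omega⟩) : ℝ) + 2)
    (hbk : lx (b ⟨k - 1, by omega⟩) = (k : ℝ) - 1 ∧ rx (b ⟨k - 1, by omega⟩) = (k : ℝ) ∧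
      ly (b ⟨k - 1, by omega⟩) = 0 ∧
      ry (b ⟨k - 1, by omega⟩) = (h : ℝ) - (T.dist r' (b ⟨k - 1, by omega⟩) : ℝ) + 2)
    (hbi : ∀ i : Fin k, 2 ≤ (i : ℕ) → (i : ℕ) ≤ k - 2 →
      lx (b i) = ((i : ℕ) : ℝ) ∧ rx (b i) = ((i : ℕ) : ℝ) + 1 ∧ ly (b i) = 1 ∧
      ry (b i) = (h : ℝ) - (T.dist r' (b i) : ℝ) + 2)
    (hintv : ∀ v : V, 2 ≤ T.degree v →
      lx v = sInf (lx '' LeafSet T r' v) ∧ rx v = sSup (lx '' LeafSet T r' v) ∧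
      ly v = (h : ℝ) - (T.dist r' v : ℝ) + 1 ∧ ry v = (h : ℝ) - (T.dist r' v : ℝ) + 2)
    :
    ∀ u v : V, u ≠ v → 2 ≤ T.degree u → 2 ≤ T.degree v →
      ¬ IsAncestor T r' u v → ¬ IsAncestor T r' v u →
      Set.Icc (lx u) (rx u) ∩ Set.Icc (lx v) (rx v) = ∅ := by
  intro u v _ hu hv hnuv hnvu
  have hblock : ∀ w, 2 ≤ T.degree w → w ≠ r' → ∃ s t : Fin k, s ≤ t ∧
      ((s : ℕ) ≤ 1 → (s : ℕ) = t) ∧ LeafSet T r' w = b '' Icc s t := by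
    intro w hw hwr
    obtain ⟨s, t, hst, hL⟩ := hconsec w hw
    replace hL : LeafSet T r' w = b '' Icc s t := by
      rw [hL]; ext; simp [eq_comm, and_assoc]
    refine ⟨s, t, hst, fun hs1 => congrArg Fin.val ?_, hL⟩
    have hwb : w ≠ b s := by
      rintro rfl
      have := (hleaf (b s)).2 ⟨s, rfl⟩
      omega
    obtain h0 | h1 : s = ⟨0, by omega⟩ ∨ s = ⟨1, by omega⟩ := by
      simp only [Fin.ext_iff]; omega
    · exact eq_of_leafSet_eq_image_Icc hT hinj hst hL hwb hwr (h0 ▸ hpath0)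
    · exact eq_of_leafSet_eq_image_Icc hT hinj hst hL hwb hwr (h1 ▸ hpath1)
  have hroot : ∀ w, IsAncestor T r' r' w := fun _ p _ => p.start_mem_support
  obtain ⟨s, t, hst, hs, hLu⟩ := hblock u hu fun hur => hnuv (hur ▸ hroot v)
  obtain ⟨s', t', hst', hs', hLv⟩ := hblock v hv fun hvr => hnvu (hvr ▸ hroot u)
  have hlx := lx_eq_leafLx hk b lx hb0.1 hb1.1 hbk.1 fun i h2 hk2 => (hbi i h2 hk2).1
  have hdisj := disjoint_leafSet_of_not_isAncestor hT hnuv hnvu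
  rw [hLu, hLv] at hdisj
  rw [(hintv u hu).1, (hintv u hu).2.1, (hintv v hv).1, (hintv v hv).2.1, hLu, hLv,
    (sInf_sSup_image_leafLx hlx hst hs).1, (sInf_sSup_image_leafLx hlx hst hs).2,
    (sInf_sSup_image_leafLx hlx hst' hs').1, (sInf_sSup_image_leafLx hlx hst' hs').2,
    ← Set.disjoint_iff_inter_eq_empty]
  rcases lt_or_lt_of_disjoint_Icc hdisj.of_image hst hst' with hlt | hlt
  · exact disjoint_Icc_leafLx hst hlt hs hs'
  · exact (disjoint_Icc_leafLx hst' hlt hs' hs).symm
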